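/- The polynomials G_n defined by G_n(z) := 2^{-n} Σ_{j=0}^{⌊(n−1)/2⌋} C(n,j) z^{n−2j} (with G_0 = 0) satisfy the recurrence G_{n+1}(z) = φ(z) G_n(z) + (z a_n)/2 − a_{n+1}/2 for all n ≥ 0 and all z ≠ 0, where φ(z) = (z + 1/z)/2 and a_n := 2^{-n} C(n, n/2) for n even, a_n := 0 for n odd. -/

import Mathlib

/-- The Zhoukowsky map. -/
noncomputable def phi (z : ℂ) : ℂ := (z + z⁻¹) / 2

/-- `a n = binomial(n, n/2)/2^n` for even `n`, and `0` for odd `n`. -/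
noncomputable def a (n : ℕ) : ℂ := if Even n then (n.choose (n / 2) : ℂ) / 2 ^ n else 0

/-- `G 0 = 0` and `G n z = 2^{-n} Σ_{j=0}^{⌊(n-1)/2⌋} C(n,j) z^{n-2j}` for `n ≥ 1`. -/
noncomputable def G (n : ℕ) (z : ℂ) : ℂ :=
  if n = 0 then 0 else
    (1 / 2 ^ n) * ∑ j ∈ Finset.range ((n - 1) / 2 + 1), (n.choose j : ℂ) * z ^ (n - 2 * j)

/-!
`(2 φ(z))ⁿ = Σ_{j ≤ n} C(n,j) z^{n-2j}`, and `2ⁿ Gₙ(z)` is the part of this sum with positive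
exponents, i.e. its first `⌈n/2⌉` terms. Pascal's rule gives, for the partial sums
`T(n, K) = Σ_{j < K} C(n,j) z^{n-2j}`, the identity `T(n+1, K+1) = z T(n, K+1) + z⁻¹ T(n, K)`.
Passing from `n` to `n + 1` changes the number of terms by one exactly when `n` is even, so the
only correction is the central term `C(n, n/2) = 2ⁿ aₙ`: it yields `z aₙ / 2` for even `n`, and
`-aₙ₊₁ / 2` for odd `n = 2k + 1` because `C(2k+2, k+1) = 2 C(2k+1, k)`.
-/

open Finset

section BinomPartialSum

variable {𝕜 : Type*} [Field 𝕜]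

def binomPartialSum (n K : ℕ) (z : 𝕜) : 𝕜 :=
  ∑ j ∈ range K, (n.choose j : 𝕜) * z ^ ((n : ℤ) - 2 * j)

theorem binomPartialSum_succ_right (n K : ℕ) (z : 𝕜) :
    binomPartialSum n (K + 1) z = binomPartialSum n K z + n.choose K * z ^ ((n : ℤ) - 2 * K) :=
  sum_range_succ _ _

theorem binomPartialSum_succ_succ (n K : ℕ) {z : 𝕜} (hz : z ≠ 0) :
    binomPartialSum (n + 1) (K + 1) z =
      z * binomPartialSum n (K + 1) z + z⁻¹ * binomPartialSum n K z := by
  simp only [binomPartialSum]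
  rw [sum_range_succ', sum_range_succ' _ K, mul_add, mul_sum, mul_sum, add_right_comm,
    ← sum_add_distrib]
  congr 1
  · refine sum_congr rfl fun j _ => ?_
    have h₁ : ((n + 1 : ℕ) : ℤ) - 2 * (j + 1 : ℕ) = ((n : ℤ) - 2 * (j + 1 : ℕ)) + 1 := by
      push_cast; ring
    have h₂ : (n : ℤ) - 2 * j = ((n : ℤ) - 2 * (j + 1 : ℕ)) + 2 := by
      push_cast; ring
    rw [h₁, h₂, zpow_add₀ hz, zpow_add₀ hz, Nat.choose_succ_succ']
    push_cast
    field_simp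
    ring
  · simp [zpow_add_one₀ hz, mul_comm]

end BinomPartialSum

theorem G_eq_binomPartialSum (n : ℕ) (z : ℂ) :
    G n z = binomPartialSum n ((n + 1) / 2) z / 2 ^ n := by
  rcases Nat.eq_zero_or_pos n with rfl | hn
  · simp [G, binomPartialSum]
  rw [G, if_neg hn.ne', show (n - 1) / 2 + 1 = (n + 1) / 2 by omega, binomPartialSum,
    one_div_mul_eq_div]
  congr 1
  refine sum_congr rfl fun j hj => ?_
  rw [mem_range] at hj
  rw [← zpow_natCast, Nat.cast_sub (by omega)]
  push_cast
  rfl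

theorem a_two_mul (k : ℕ) : a (2 * k) = (2 * k).choose k / 2 ^ (2 * k) := by
  simp [a]

theorem a_two_mul_add_one (k : ℕ) : a (2 * k + 1) = 0 := by
  simp [a]

theorem stmt_10 (n : ℕ) (z : ℂ) (hz : z ≠ 0) :
    G (n + 1) z = phi z * G n z + z * a n / 2 - a (n + 1) / 2 := by
  simp only [G_eq_binomPartialSum, phi]
  obtain ⟨k, rfl | rfl⟩ := Nat.even_or_odd' n
  · rw [show (2 * k + 1 + 1) / 2 = k + 1 by omega, show (2 * k + 1) / 2 = k by omega,
      binomPartialSum_succ_succ _ _ hz, binomPartialSum_succ_right, a_two_mul, a_two_mul_add_one]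
    simp only [Nat.cast_mul, Nat.cast_ofNat, sub_self, zpow_zero, mul_one, zero_div, sub_zero]
    field_simp
    ring
  · have hc : ((2 * (k + 1)).choose (k + 1) : ℂ) = 2 * (2 * k + 1).choose k := by
      rw [mul_add_one, Nat.choose_succ_succ', Nat.choose_symm_half]
      push_cast
      ring
    rw [show (2 * k + 1 + 1 + 1) / 2 = k + 1 by omega, show (2 * k + 1 + 1) / 2 = k + 1 by omega,
      binomPartialSum_succ_succ _ _ hz, binomPartialSum_succ_right (2 * k + 1), a_two_mul_add_one,
      show a (2 * k + 1 + 1) = a (2 * (k + 1)) by ring_nf, a_two_mul, hc]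
    simp only [Nat.cast_add, Nat.cast_mul, Nat.cast_ofNat, Nat.cast_one, add_sub_cancel_left,
      zpow_one, mul_zero, zero_div, add_zero]
    field_simp
    ring
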